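/- arXiv:2002.05722 — 7 statements merged into one kernel-verified Lean document; each statement's English description precedes it below -/
import Mathlib

section
/- For all natural numbers n and real x, y, the Laplace-type integral (1/n!) ∫_0^∞ e^{-s} H_n(-s x, -s y) ds equals (-1)^n Σ_{r=0}^{⌊n/2⌋} (n-r)! x^(n-2r) (-y)^r / ((n-2r)! r!), i.e. the two-variable Chebyshev polynomial of the second kind U_n(x,y). -/
open Real Finset MeasureTheory

noncomputable def hermite2 (n : ℕ) (x y : ℝ) : ℝ :=
  (Nat.factorial n : ℝ) *
    ∑ r ∈ Finset.range (n / 2 + 1),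
      x ^ (n - 2 * r) * y ^ r / ((Nat.factorial (n - 2 * r) : ℝ) * (Nat.factorial r : ℝ))

/-!
`H_n` is weighted-homogeneous, so `H_n(-s x, -s y) = H_n(s (-x), s (-y))` is a polynomial in `s`
whose term of index `r` has degree `n - r`. Integrating against `e^{-s}` replaces `s^(n-r)` by
`(n-r)!`, and `(-x)^(n-2r) = (-1)^n x^(n-2r)` because `n - 2r ≡ n (mod 2)`.
-/

theorem integrableOn_exp_neg_mul_pow (k : ℕ) :
    IntegrableOn (fun s : ℝ => exp (-s) * s ^ k) (Set.Ioi 0) := by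
  refine (GammaIntegral_convergent (s := (k : ℝ) + 1) (by positivity)).congr_fun
    (fun s _ => ?_) measurableSet_Ioi
  simp only [add_sub_cancel_right, rpow_natCast]

theorem integral_exp_neg_mul_pow (k : ℕ) :
    ∫ s in Set.Ioi (0 : ℝ), exp (-s) * s ^ k = k.factorial := by
  have hGamma := Gamma_eq_integral (s := (k : ℝ) + 1) (by positivity)
  rw [Gamma_nat_eq_factorial] at hGamma
  rw [hGamma]
  refine setIntegral_congr_fun measurableSet_Ioi fun s _ => ?_
  simp only [add_sub_cancel_right, rpow_natCast]

theorem integral_exp_neg_mul_sum_pow {ι : Type*} (t : Finset ι) (a : ι → ℝ) (k : ι → ℕ) :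
    ∫ s in Set.Ioi (0 : ℝ), exp (-s) * ∑ i ∈ t, a i * s ^ k i =
      ∑ i ∈ t, a i * (k i).factorial := by
  simp_rw [Finset.mul_sum, mul_left_comm (exp _)]
  rw [integral_finsetSum _ fun i _ => (integrableOn_exp_neg_mul_pow (k i)).const_mul (a i)]
  simp_rw [integral_const_mul, integral_exp_neg_mul_pow]

theorem hermite2_mul_mul (n : ℕ) (t x y : ℝ) :
    hermite2 n (t * x) (t * y) =
      n.factorial * ∑ r ∈ range (n / 2 + 1),
        x ^ (n - 2 * r) * y ^ r / ((n - 2 * r).factorial * r.factorial) * t ^ (n - r) := by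
  unfold hermite2
  congr 1
  refine sum_congr rfl fun r hr => ?_
  have hdeg : n - 2 * r + r = n - r := by
    have := mem_range.mp hr
    omega
  rw [mul_pow, mul_pow, ← hdeg, pow_add]
  ring

theorem neg_pow_sub_two_mul {R : Type*} [Ring R] (x : R) {n r : ℕ} (h : 2 * r ≤ n) :
    (-x) ^ (n - 2 * r) = (-1) ^ n * x ^ (n - 2 * r) := by
  conv_rhs => rw [← Nat.sub_add_cancel h, pow_add, pow_mul]
  rw [neg_pow]
  norm_num

theorem cheb2_integral_repr (n : ℕ) (x y : ℝ) :
    (1 / (Nat.factorial n : ℝ)) *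
        ∫ s in Set.Ioi (0 : ℝ), Real.exp (-s) * hermite2 n (-s * x) (-s * y) =
      (-1 : ℝ) ^ n *
        ∑ r ∈ Finset.range (n / 2 + 1),
          (Nat.factorial (n - r) : ℝ) * x ^ (n - 2 * r) * (-y) ^ r /
            ((Nat.factorial (n - 2 * r) : ℝ) * (Nat.factorial r : ℝ)) := by
  have hn : (n.factorial : ℝ) ≠ 0 := by positivity
  simp_rw [neg_mul_comm _ x, neg_mul_comm _ y, hermite2_mul_mul, mul_left_comm (exp _),
    integral_const_mul, integral_exp_neg_mul_sum_pow, mul_sum]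
  refine sum_congr rfl fun r hr => ?_
  rw [neg_pow_sub_two_mul x (by have := mem_range.mp hr; omega)]
  field_simp
end

section
/- For all natural numbers n, l and real x, y, t, the Rainville-type generating function holds: Σ_{n=0}^∞ (t^n/n!) H_{n+l}(x,y) = H_l(x + 2 y t, y) · exp(x t + y t²). -/
/-!
For `l = 0` the series is the generating function `exp (x t + y t²) = exp (x t) * exp (y t²)`:
regrouping the Cauchy product of the two exponential series along `n = j + 2 r` gives exactly
`tⁿ / n! * H_n(x, y)`. For the induction on `l`, both sides follow the recurrence
`H_{m+1} = x H_m + 2 m y H_{m-1}`: on the left because `t * ∑ tⁿ/n! a_{n+1} = ∑ tⁿ/n! (n a_n)`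
turns the factor `2 (n + l) y` into `2 y t` plus `2 l y`, on the right because the first argument
is `x + 2 y t`.
-/

open Real Finset

open scoped Nat

theorem hasSum_pow_div_factorial_mul_natCast_mul {K : Type*} [Field K] [CharZero K]
    [TopologicalSpace K] [IsTopologicalRing K] {a : ℕ → K} {t S : K}
    (h : HasSum (fun n => t ^ n / n ! * a (n + 1)) S) :
    HasSum (fun n => t ^ n / n ! * (n * a n)) (t * S) := by
  have hshift : HasSum (fun n => t ^ (n + 1) / (n + 1)! * ((n + 1 : ℕ) * a (n + 1))) (t * S) := by
    refine (h.mul_left t).congr_fun fun n => ?_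
    rw [Nat.factorial_succ]
    push_cast
    field_simp
    ring
  simpa using (hasSum_nat_add_iff (f := fun n => t ^ n / n ! * (n * a n)) 1).mp hshift

theorem Real.hasSum_pow_div_factorial (c : ℝ) : HasSum (fun n => c ^ n / n !) (exp c) := by
  rw [Real.exp_eq_exp_ℝ]
  exact NormedSpace.expSeries_div_hasSum_exp c

theorem Real.hasSum_pow_div_factorial_mul_pow_div_factorial (a b : ℝ) :
    HasSum (fun p : ℕ × ℕ => a ^ p.1 / p.1 ! * (b ^ p.2 / p.2 !)) (exp (a + b)) := by
  rw [Real.exp_add]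
  have hsummable := summable_mul_of_summable_norm
    (NormedSpace.norm_expSeries_div_summable a) (NormedSpace.norm_expSeries_div_summable b)
  exact (hasSum_pow_div_factorial a).mul (hasSum_pow_div_factorial b) hsummable

def sigmaFinDivTwoEquivProd : (Σ n : ℕ, Fin (n / 2 + 1)) ≃ ℕ × ℕ where
  toFun p := (p.1 - 2 * p.2, p.2)
  invFun q := ⟨q.1 + 2 * q.2, q.2, by omega⟩
  left_inv := by
    rintro ⟨n, r, hr⟩
    have hn : n - 2 * r + 2 * r = n := by omega
    ext
    · exact hn
    · exact (Fin.heq_ext_iff (by simp only [hn])).mpr rfl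
  right_inv := by
    rintro ⟨j, r⟩
    simp

theorem pow_div_factorial_mul_hermite2 (n : ℕ) (x y t : ℝ) :
    t ^ n / n ! * hermite2 n x y =
      ∑ r ∈ range (n / 2 + 1),
        (x * t) ^ (n - 2 * r) / (n - 2 * r)! * ((y * t ^ 2) ^ r / r !) := by
  rw [hermite2, ← mul_assoc, div_mul_cancel₀ _ (by positivity), mul_sum]
  refine sum_congr rfl fun r hr => ?_
  have ht : t ^ n = t ^ (n - 2 * r) * (t ^ 2) ^ r := by
    rw [← pow_mul, ← pow_add]
    congr
    have := mem_range.mp hr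
    omega
  rw [ht]
  ring

theorem hasSum_pow_div_factorial_mul_hermite2 (x y t : ℝ) :
    HasSum (fun n => t ^ n / n ! * hermite2 n x y) (exp (x * t + y * t ^ 2)) := by
  have hσ := sigmaFinDivTwoEquivProd.hasSum_iff.mpr
    (Real.hasSum_pow_div_factorial_mul_pow_div_factorial (x * t) (y * t ^ 2))
  refine hσ.sigma fun n => ?_
  rw [pow_div_factorial_mul_hermite2, ← Fin.sum_univ_eq_sum_range]
  exact hasSum_fintype _

theorem Nat.succ_descFactorial_succ_eq_add (m k : ℕ) :
    (m + 1).descFactorial (k + 1) = m.descFactorial (k + 1) + (k + 1) * m.descFactorial k := by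
  rw [succ_descFactorial_succ, descFactorial_succ, ← add_mul]
  rcases le_or_gt k m with hk | hk
  · congr 1
    omega
  · simp [descFactorial_of_lt hk]

theorem descFactorial_mul_pow_succ_sub {R : Type*} [CommSemiring R] (m k : ℕ) (x : R) :
    m.descFactorial k * x ^ (m + 1 - k) = x * (m.descFactorial k * x ^ (m - k)) := by
  rcases le_or_gt k m with hk | hk
  · rw [Nat.sub_add_comm hk, pow_succ]
    ring
  · simp [Nat.descFactorial_of_lt hk]

/-- `m! / (m - 2 r)!` written as a descending factorial, which vanishes for `2 r > m`: `hermite2`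
is the sum of these terms over any long enough range of `r`, the truncated `m - 2 r` being
harmless. -/
noncomputable def hermite2Term (m r : ℕ) (x y : ℝ) : ℝ :=
  m.descFactorial (2 * r) / r ! * x ^ (m - 2 * r) * y ^ r

theorem hermite2Term_zero (m : ℕ) (x y : ℝ) : hermite2Term m 0 x y = x ^ m := by
  simp [hermite2Term]

theorem hermite2Term_add_two_succ (m r : ℕ) (x y : ℝ) :
    hermite2Term (m + 2) (r + 1) x y =
      x * hermite2Term (m + 1) (r + 1) x y + 2 * (m + 1) * y * hermite2Term m r x y := by
  have hpascal : (m + 2).descFactorial (2 * (r + 1)) =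
      (m + 1).descFactorial (2 * (r + 1)) + 2 * (r + 1) * ((m + 1) * m.descFactorial (2 * r)) := by
    rw [← Nat.succ_descFactorial_succ m (2 * r)]
    exact Nat.succ_descFactorial_succ_eq_add (m + 1) (2 * r + 1)
  have hpow := descFactorial_mul_pow_succ_sub (m + 1) (2 * (r + 1)) x
  rw [show m + 1 + 1 - 2 * (r + 1) = m - 2 * r by omega] at hpow
  rw [hermite2Term, hermite2Term, hermite2Term, show m + 2 - 2 * (r + 1) = m - 2 * r by omega,
    hpascal, Nat.factorial_succ]
  push_cast at hpow ⊢
  field_simp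
  linear_combination y ^ (r + 1) * hpow

theorem hermite2_eq_sum_hermite2Term (m : ℕ) (x y : ℝ) {N : ℕ} (hN : m / 2 < N) :
    hermite2 m x y = ∑ r ∈ range N, hermite2Term m r x y := by
  rw [hermite2, mul_sum, ← sum_subset (range_subset_range.mpr hN) fun r _ hr => ?_]
  · refine sum_congr rfl fun r hr => ?_
    have h2r : 2 * r ≤ m := by have := mem_range.mp hr; omega
    rw [hermite2Term, ← Nat.factorial_mul_descFactorial h2r]
    push_cast
    field_simp
  · rw [hermite2Term, Nat.descFactorial_of_lt (by simp at hr; omega)]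
    simp

theorem hermite2_add_two (m : ℕ) (x y : ℝ) :
    hermite2 (m + 2) x y = x * hermite2 (m + 1) x y + 2 * (m + 1) * y * hermite2 m x y := by
  rw [hermite2_eq_sum_hermite2Term (m + 2) x y (N := m + 2) (by omega),
    hermite2_eq_sum_hermite2Term (m + 1) x y (N := m + 2) (by omega),
    hermite2_eq_sum_hermite2Term m x y (N := m + 1) (by omega),
    sum_range_succ' _ (m + 1), sum_range_succ' _ (m + 1), mul_add, mul_sum, mul_sum,
    add_right_comm, ← sum_add_distrib]
  simp only [hermite2Term_add_two_succ, hermite2Term_zero, pow_succ']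

theorem hermite2_zero (x y : ℝ) : hermite2 0 x y = 1 := by
  simp [hermite2]

theorem hermite2_succ (m : ℕ) (x y : ℝ) :
    hermite2 (m + 1) x y = x * hermite2 m x y + 2 * m * y * hermite2 (m - 1) x y := by
  cases m with
  | zero => simp [hermite2]
  | succ m =>
    rw [hermite2_add_two]
    push_cast
    ring_nf

/-- `hpred` is `l` times the statement for `l - 1`, so that the step also applies at `l = 0`. -/
theorem hasSum_hermite2_rainville_succ {l : ℕ} {x y t : ℝ}
    (hl : HasSum (fun n => t ^ n / n ! * hermite2 (n + l) x y)
      (hermite2 l (x + 2 * y * t) y * exp (x * t + y * t ^ 2)))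
    (hpred : HasSum (fun n => l * (t ^ n / n ! * hermite2 (n + l - 1) x y))
      (l * (hermite2 (l - 1) (x + 2 * y * t) y * exp (x * t + y * t ^ 2)))) :
    HasSum (fun n => t ^ n / n ! * hermite2 (n + (l + 1)) x y)
      (hermite2 (l + 1) (x + 2 * y * t) y * exp (x * t + y * t ^ 2)) := by
  have hderiv := hasSum_pow_div_factorial_mul_natCast_mul (a := fun n => hermite2 (n + l - 1) x y)
    (by simpa [add_right_comm _ 1 l] using hl)
  have hsum := ((hl.mul_left x).add (hderiv.mul_left (2 * y))).add (hpred.mul_left (2 * y))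
  have hvalue : hermite2 (l + 1) (x + 2 * y * t) y * exp (x * t + y * t ^ 2) =
      x * (hermite2 l (x + 2 * y * t) y * exp (x * t + y * t ^ 2)) +
        2 * y * (t * (hermite2 l (x + 2 * y * t) y * exp (x * t + y * t ^ 2))) +
        2 * y * (l * (hermite2 (l - 1) (x + 2 * y * t) y * exp (x * t + y * t ^ 2))) := by
    rw [hermite2_succ]
    ring
  rw [hvalue]
  refine hsum.congr_fun fun n => ?_
  rw [← add_assoc, hermite2_succ]
  push_cast
  ring

theorem hermite2_rainville (l : ℕ) (x y t : ℝ) :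
    HasSum (fun n : ℕ => t ^ n / (Nat.factorial n : ℝ) * hermite2 (n + l) x y)
      (hermite2 l (x + 2 * y * t) y * Real.exp (x * t + y * t ^ 2)) := by
  have hgen := hasSum_pow_div_factorial_mul_hermite2 x y t
  induction l using Nat.twoStepInduction with
  | zero => simpa [hermite2_zero] using hgen
  | one => exact hasSum_hermite2_rainville_succ (by simpa [hermite2_zero] using hgen) (by simp)
  | more l h0 h1 =>
    exact hasSum_hermite2_rainville_succ h1 (by simpa using h0.mul_left ((l : ℝ) + 1))
end

section
/- For m ≥ 2 a natural number and real x, y, t with |x t| + |y| |t|^m < 1, the lacunary Chebyshev (Humbert) polynomials U_n^(m)(x,y) := (-1)^n Σ_{r=0}^{⌊n/m⌋} (-1)^((m-1)r) (n-(m-1)r)! x^(n-mr) y^r / ((n-mr)! r!) satisfy Σ_{n=0}^∞ t^n U_n^(m)(x,y) = 1/(1 + x t + y t^m). -/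
open Real Finset

noncomputable def humbert (m n : ℕ) (x y : ℝ) : ℝ :=
  (-1 : ℝ) ^ n *
    ∑ r ∈ Finset.range (n / m + 1),
      (-1 : ℝ) ^ ((m - 1) * r) * (Nat.factorial (n - (m - 1) * r) : ℝ) *
        x ^ (n - m * r) * y ^ r /
        ((Nat.factorial (n - m * r) : ℝ) * (Nat.factorial r : ℝ))

/-!
With `u = -x t` and `v = -y t^m` we have `‖u‖ + ‖v‖ < 1`, so
`1 / (1 + x t + y t^m) = ∑ₖ (u + v)^k = ∑_{j,r} C(j + r, r) u^j v^r`, the double series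
converging absolutely. Since `u^j v^r = (-1)^(j+r) x^j y^r t^(j + m r)`, grouping its terms by
the power `n = j + m r` of `t` gives `t^n U_n^(m)(x, y)`.
-/

theorem sum_antidiagonal_choose_mul_pow_mul_pow {R : Type*} [CommSemiring R] (u v : R) (n : ℕ) :
    ∑ p ∈ antidiagonal n, ((p.1 + p.2).choose p.2 : R) * u ^ p.1 * v ^ p.2 = (u + v) ^ n := by
  rw [(Commute.all u v).add_pow']
  refine sum_congr rfl fun p hp => ?_
  have hp : p.1 + p.2 = n := mem_antidiagonal.mp hp
  rw [hp, nsmul_eq_mul, ← Nat.choose_symm_of_eq_add hp.symm]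
  ring

theorem HasSum.of_sum_antidiagonal {E : Type*} [NormedAddCommGroup E] [CompleteSpace E]
    {f : ℕ × ℕ → E} {a : E} (hnorm : Summable fun n => ∑ p ∈ antidiagonal n, ‖f p‖)
    (hf : HasSum (fun n => ∑ p ∈ antidiagonal n, f p) a) : HasSum f a := by
  let e := HasAntidiagonal.sigmaAntidiagonalEquivProd (A := ℕ)
  have hsummable : Summable f := by
    refine Summable.of_norm ?_
    rw [← e.summable_iff]
    exact (summable_sigma_of_nonneg fun _ => norm_nonneg _).mpr
      ⟨fun n => (antidiagonal n).summable (‖f ·‖),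
        hnorm.congr fun n => ((antidiagonal n).tsum_subtype (‖f ·‖)).symm⟩
  have hsigma : HasSum (fun n => ∑ p ∈ antidiagonal n, f p) (∑' p, f p) :=
    (e.hasSum_iff.mpr hsummable.hasSum).sigma fun n => (antidiagonal n).hasSum _
  exact hf.unique hsigma ▸ hsummable.hasSum

theorem hasSum_choose_mul_pow_mul_pow {𝕜 : Type*} [RCLike 𝕜] {u v : 𝕜}
    (h : ‖u‖ + ‖v‖ < 1) :
    HasSum (fun p : ℕ × ℕ => ((p.1 + p.2).choose p.2 : 𝕜) * u ^ p.1 * v ^ p.2)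
      (1 - (u + v))⁻¹ := by
  refine HasSum.of_sum_antidiagonal ?_ ?_
  · simp only [norm_mul, norm_pow, RCLike.norm_natCast, sum_antidiagonal_choose_mul_pow_mul_pow]
    exact summable_geometric_of_lt_one (by positivity) h
  · simp only [sum_antidiagonal_choose_mul_pow_mul_pow]
    exact hasSum_geometric_of_norm_lt_one ((norm_add_le u v).trans_lt h)

theorem mem_range_div_add_one_iff {m n r : ℕ} (hm : 0 < m) :
    r ∈ range (n / m + 1) ↔ m * r ≤ n := by
  rw [mem_range, Nat.lt_succ_iff, Nat.le_div_iff_mul_le hm, mul_comm]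

theorem HasSum.fiberwise_add_mul {α : Type*} [AddCommMonoid α] [TopologicalSpace α]
    [ContinuousAdd α] [RegularSpace α] {f : ℕ × ℕ → α} {a : α} {m : ℕ} (hm : 0 < m)
    (hf : HasSum f a) : HasSum (fun n => ∑ r ∈ range (n / m + 1), f (n - m * r, r)) a := by
  set e : ℕ × ℕ → ℕ × ℕ := fun p => (p.1 + m * p.2, p.2)
  have he : e.Injective := fun p q hpq => by
    simp only [e, Prod.mk.injEq] at hpq
    exact Prod.ext (by rw [hpq.2] at hpq; exact Nat.add_right_cancel hpq.1) hpq.2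
  refine ((hasSum_extend_zero he).mpr hf).prod_fiberwise fun n => ?_
  have hzero : ∀ r ∉ range (n / m + 1), Function.extend e f 0 (n, r) = 0 := by
    refine fun r hr => Function.extend_apply' _ _ _ ?_
    rintro ⟨⟨j, r'⟩, hjr⟩
    simp only [e, Prod.mk.injEq] at hjr
    exact hr ((mem_range_div_add_one_iff hm).mpr (hjr.2 ▸ hjr.1 ▸ Nat.le_add_left _ _))
  convert hasSum_sum_of_ne_finset_zero (L := SummationFilter.unconditional ℕ) hzero using 1
  refine sum_congr rfl fun r hr => ?_
  obtain ⟨j, rfl⟩ : ∃ j, n = j + m * r :=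
    Nat.exists_eq_add_of_le' ((mem_range_div_add_one_iff hm).mp hr)
  rw [show (j + m * r, r) = e (j, r) from rfl, he.extend_apply, Nat.add_sub_cancel]

theorem pow_mul_humbert {m : ℕ} (hm : 0 < m) (n : ℕ) (x y t : ℝ) :
    t ^ n * humbert m n x y = ∑ r ∈ range (n / m + 1),
      ((n - m * r + r).choose r : ℝ) * (-(x * t)) ^ (n - m * r) * (-(y * t ^ m)) ^ r := by
  rw [humbert, ← mul_assoc, mul_sum]
  refine sum_congr rfl fun r hr => ?_
  obtain ⟨j, rfl⟩ : ∃ j, n = j + m * r :=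
    Nat.exists_eq_add_of_le' ((mem_range_div_add_one_iff hm).mp hr)
  obtain ⟨k, rfl⟩ : ∃ k, m = k + 1 := Nat.exists_eq_add_of_le' hm
  have hsign : (-1 : ℝ) ^ (j + (k + 1) * r) * (-1) ^ (k * r) = (-1) ^ (j + r) := by
    rw [← pow_add, show j + (k + 1) * r + k * r = j + r + 2 * (k * r) by ring, pow_add, pow_mul]
    norm_num
  have hfac : j + (k + 1) * r - k * r = j + r := by rw [add_mul, one_mul]; omega
  rw [Nat.add_sub_cancel, Nat.add_sub_cancel, hfac, ← Nat.choose_symm_add, Nat.cast_add_choose]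
  field_simp
  rw [mul_assoc (t ^ _), hsign, neg_pow, neg_pow (y * _)]
  ring

theorem humbert_genfun (m : ℕ) (hm : 2 ≤ m) (x y t : ℝ)
    (h : |x * t| + |y| * |t| ^ m < 1) :
    HasSum (fun n : ℕ => t ^ n * humbert m n x y) (1 / (1 + x * t + y * t ^ m)) := by
  have hm0 : 0 < m := by omega
  have hnorm : ‖-(x * t)‖ + ‖-(y * t ^ m)‖ < 1 := by
    simpa only [norm_neg, Real.norm_eq_abs, abs_mul, abs_pow] using h
  have hgrouped := (hasSum_choose_mul_pow_mul_pow hnorm).fiberwise_add_mul hm0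
  rw [one_div, show 1 + x * t + y * t ^ m = 1 - (-(x * t) + -(y * t ^ m)) by ring]
  simp_rw [pow_mul_humbert hm0]
  exact hgrouped
end

section
/- For every natural number m and real x, y, t such that 1 + x t + y t² > 0, the m-th derivative with respect to t of 1/(1 + x t + y t²) equals m! · U_m( (x + 2 y t)/(1 + x t + y t²), y/(1 + x t + y t²) ) / (1 + x t + y t²), where U_m is the two-variable Chebyshev polynomial of the second kind. -/
open Real Finset

noncomputable def cheb2 (n : ℕ) (x y : ℝ) : ℝ :=
  (-1 : ℝ) ^ n *
    ∑ r ∈ Finset.range (n / 2 + 1),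
      (Nat.factorial (n - r) : ℝ) * x ^ (n - 2 * r) * (-y) ^ r /
        ((Nat.factorial (n - 2 * r) : ℝ) * (Nat.factorial r : ℝ))

/-!
Write `q s = 1 + x s + y s²` and `f = 1 / q`. Since `q` is quadratic, Leibniz's rule applied to
`q · f = 1` gives `q f⁽ⁿ⁺²⁾ + (n + 2) q' f⁽ⁿ⁺¹⁾ + (n + 2)(n + 1) y f⁽ⁿ⁾ = 0`. Divided by `(n + 2)!`
this is the three-term recurrence `U_{n+2}(a, b) = -a U_{n+1}(a, b) - b U_n(a, b)` at
`a = q' / q`, `b = y / q`, with the right initial values. For the explicit sum defining `U_n`,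
that recurrence is Pascal's rule: `U_n(a, b) = (-1)ⁿ ∑ C(n - r, r) a^(n - 2r) (-b)^r`.
-/

open Filter Topology
open scoped Nat

section Fibonacci

variable {R : Type*} [CommSemiring R]

-- The terms with `2 * r > n` vanish with their binomial coefficient, so the truncated
-- subtraction in the exponent is harmless.
def fibPoly (n : ℕ) (x z : R) : R :=
  ∑ r ∈ range (n + 1), ((n - r).choose r : R) * x ^ (n - 2 * r) * z ^ r

theorem fibPoly_zero (x z : R) : fibPoly 0 x z = 1 := by simp [fibPoly]

theorem fibPoly_one (x z : R) : fibPoly 1 x z = x := by simp [fibPoly, sum_range_succ]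

theorem fibPoly_add_two (n : ℕ) (x z : R) :
    fibPoly (n + 2) x z = x * fibPoly (n + 1) x z + z * fibPoly n x z := by
  have term (r : ℕ) (hr : r < n + 1) :
      ((n + 2 - (r + 1)).choose (r + 1) : R) * x ^ (n + 2 - 2 * (r + 1)) * z ^ (r + 1) =
        x * (((n + 1 - (r + 1)).choose (r + 1) : R) * x ^ (n + 1 - 2 * (r + 1)) * z ^ (r + 1)) +
          z * (((n - r).choose r : R) * x ^ (n - 2 * r) * z ^ r) := by
    rw [show n + 2 - (r + 1) = n - r + 1 by omega, Nat.choose_succ_succ', Nat.cast_add,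
      show n + 2 - 2 * (r + 1) = n - 2 * r by omega, show n + 1 - (r + 1) = n - r by omega]
    rcases le_or_gt (2 * r + 1) n with h | h
    · rw [show x ^ (n - 2 * r) = x * x ^ (n + 1 - 2 * (r + 1)) by
        rw [← pow_succ']; congr 1; omega]
      ring
    · rw [Nat.choose_eq_zero_of_lt (by omega : n - r < r + 1)]
      ring
  have h_left : fibPoly (n + 2) x z = ∑ r ∈ range (n + 1),
      ((n + 2 - (r + 1)).choose (r + 1) : R) * x ^ (n + 2 - 2 * (r + 1)) * z ^ (r + 1) +
        x ^ (n + 2) := by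
    rw [fibPoly, sum_range_succ', sum_range_succ]
    simp
  have h_right : x * fibPoly (n + 1) x z = ∑ r ∈ range (n + 1),
      x * (((n + 1 - (r + 1)).choose (r + 1) : R) * x ^ (n + 1 - 2 * (r + 1)) * z ^ (r + 1)) +
        x ^ (n + 2) := by
    rw [fibPoly, mul_sum, sum_range_succ']
    simp [pow_succ']
  rw [h_left, h_right, fibPoly, mul_sum, add_right_comm, ← sum_add_distrib]
  exact congrArg (· + x ^ (n + 2)) (sum_congr rfl fun r hr => term r (mem_range.1 hr))

end Fibonacci

theorem cheb2_eq_neg_one_pow_mul_fibPoly (n : ℕ) (x y : ℝ) :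
    cheb2 n x y = (-1) ^ n * fibPoly n x (-y) := by
  rw [cheb2, fibPoly]
  congr 1
  have h_half : range (n / 2 + 1) ⊆ range (n + 1) := range_subset_range.2 (by omega)
  rw [← sum_subset h_half fun r _ hr => by
    rw [Nat.choose_eq_zero_of_lt (by simp only [mem_range] at hr; omega)]
    simp]
  refine sum_congr rfl fun r hr => ?_
  have hr : 2 * r ≤ n := by simp only [mem_range] at hr; omega
  rw [Nat.cast_choose ℝ (by omega : r ≤ n - r), show n - r - r = n - 2 * r by omega]
  ring

theorem cheb2_zero (x y : ℝ) : cheb2 0 x y = 1 := by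
  simp [cheb2_eq_neg_one_pow_mul_fibPoly, fibPoly_zero]

theorem cheb2_one (x y : ℝ) : cheb2 1 x y = -x := by
  simp [cheb2_eq_neg_one_pow_mul_fibPoly, fibPoly_one]

theorem cheb2_add_two (n : ℕ) (x y : ℝ) :
    cheb2 (n + 2) x y = -x * cheb2 (n + 1) x y - y * cheb2 n x y := by
  simp only [cheb2_eq_neg_one_pow_mul_fibPoly, fibPoly_add_two]
  ring

theorem eq_cheb2_mul_of_recurrence {u : ℕ → ℝ} {a b : ℝ} (h_one : u 1 = -a * u 0)
    (h_rec : ∀ n, u (n + 2) = -a * u (n + 1) - b * u n) : ∀ n, u n = cheb2 n a b * u 0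
  | 0 => by rw [cheb2_zero, one_mul]
  | 1 => by rw [cheb2_one, h_one]
  | n + 2 => by
    rw [h_rec, eq_cheb2_mul_of_recurrence h_one h_rec (n + 1),
      eq_cheb2_mul_of_recurrence h_one h_rec n, cheb2_add_two]
    ring

theorem eq_factorial_mul_cheb2_of_recurrence {d : ℕ → ℝ} {p q c : ℝ} (hq : q ≠ 0)
    (h_one : q * d 1 + p * d 0 = 0)
    (h_rec : ∀ n : ℕ, q * d (n + 2) + (n + 2) * p * d (n + 1) + (n + 2) * (n + 1) * c * d n = 0)
    (n : ℕ) : d n = n ! * cheb2 n (p / q) (c / q) * d 0 := by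
  have h_u := eq_cheb2_mul_of_recurrence (u := fun n => d n / n !) (a := p / q) (b := c / q)
    (by field_simp; linear_combination h_one) (fun n => by
      simp only [Nat.factorial_succ]
      push_cast
      field_simp
      linear_combination h_rec n) n
  simp only [Nat.factorial_zero, Nat.cast_one, div_one] at h_u
  rw [div_eq_iff (by positivity)] at h_u
  rw [h_u]
  ring

section Quadratic

variable {𝕜 : Type*} [NontriviallyNormedField 𝕜] (a b c : 𝕜)

theorem hasDerivAt_quadratic (t : 𝕜) :
    HasDerivAt (fun s => a + b * s + c * s ^ 2) (b + 2 * c * t) t := by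
  simpa [mul_comm _ c, mul_assoc] using
    (((hasDerivAt_id t).const_mul b).const_add a).fun_add ((hasDerivAt_pow 2 t).const_mul c)

theorem deriv_quadratic : deriv (fun s => a + b * s + c * s ^ 2) = fun s => b + 2 * c * s :=
  funext fun t => (hasDerivAt_quadratic a b c t).deriv

theorem iteratedDeriv_quadratic_mul {g : 𝕜 → 𝕜} {t : 𝕜} (n : ℕ)
    (hg : ContDiffAt 𝕜 (n + 2) g t) :
    iteratedDeriv (n + 2) (fun s => (a + b * s + c * s ^ 2) * g s) t =
      (a + b * t + c * t ^ 2) * iteratedDeriv (n + 2) g t +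
        (n + 2) * (b + 2 * c * t) * iteratedDeriv (n + 1) g t +
          (n + 2) * (n + 1) * c * iteratedDeriv n g t := by
  have h_one : iteratedDeriv 1 (fun s => a + b * s + c * s ^ 2) t = b + 2 * c * t := by
    rw [iteratedDeriv_one, deriv_quadratic]
  have h_second : deriv (deriv (fun s => a + b * s + c * s ^ 2)) = fun _ => 2 * c := by
    ext s
    simp [deriv_quadratic]
  have h_two : iteratedDeriv 2 (fun s => a + b * s + c * s ^ 2) t = 2 * c := by
    rw [iteratedDeriv_succ', iteratedDeriv_one, h_second]
  have h_high (k : ℕ) : iteratedDeriv (k + 3) (fun s => a + b * s + c * s ^ 2) t = 0 := by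
    rw [iteratedDeriv_succ', iteratedDeriv_succ', iteratedDeriv_succ', h_second]
    simp
  have h_choose : ((n + 2).choose 2 : 𝕜) * 2 = (n + 2) * (n + 1) := by
    have h : (n + 2).choose 2 * 2 = (n + 2) * (n + 1) := by
      simpa using (Nat.add_one_mul_choose_eq (n + 1) 1).symm
    simpa using congrArg (Nat.cast : ℕ → 𝕜) h
  rw [iteratedDeriv_fun_mul (by fun_prop) hg, sum_range_succ', sum_range_succ', sum_range_succ']
  simp only [h_high, mul_zero, zero_mul, sum_const_zero, zero_add, Nat.reduceAdd,
    iteratedDeriv_zero, h_one, h_two, Nat.choose_zero_right, Nat.choose_one_right,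
    Nat.add_sub_cancel, Nat.sub_zero, show n + 2 - 1 = n + 1 by omega]
  push_cast
  linear_combination c * iteratedDeriv n g t * h_choose

theorem deriv_one_div_quadratic {t : 𝕜} (ht : a + b * t + c * t ^ 2 ≠ 0) :
    deriv (fun s => 1 / (a + b * s + c * s ^ 2)) t =
      -(b + 2 * c * t) / (a + b * t + c * t ^ 2) ^ 2 := by
  simp only [one_div]
  exact ((hasDerivAt_quadratic a b c t).inv ht).deriv

theorem iteratedDeriv_one_div_quadratic_recurrence {t : 𝕜} (ht : a + b * t + c * t ^ 2 ≠ 0)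
    (n : ℕ) :
    (a + b * t + c * t ^ 2) * iteratedDeriv (n + 2) (fun s => 1 / (a + b * s + c * s ^ 2)) t +
        (n + 2) * (b + 2 * c * t) *
          iteratedDeriv (n + 1) (fun s => 1 / (a + b * s + c * s ^ 2)) t +
      (n + 2) * (n + 1) * c * iteratedDeriv n (fun s => 1 / (a + b * s + c * s ^ 2)) t = 0 := by
  have h_smooth : ContDiffAt 𝕜 (n + 2) (fun s => 1 / (a + b * s + c * s ^ 2)) t :=
    contDiffAt_const.div (by fun_prop) ht
  have h_mul : (fun s => (a + b * s + c * s ^ 2) * (1 / (a + b * s + c * s ^ 2))) =ᶠ[𝓝 t]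
      fun _ => 1 := by
    have h_cont : Continuous fun s => a + b * s + c * s ^ 2 := by fun_prop
    filter_upwards [h_cont.continuousAt.eventually_ne ht] with s hs using mul_one_div_cancel hs
  rw [← iteratedDeriv_quadratic_mul a b c n h_smooth, h_mul.iteratedDeriv_eq, iteratedDeriv_const]
  simp

end Quadratic

theorem cheb2_rodriguez (m : ℕ) (x y t : ℝ) (h : 0 < 1 + x * t + y * t ^ 2) :
    iteratedDeriv m (fun s : ℝ => 1 / (1 + x * s + y * s ^ 2)) t =
      (Nat.factorial m : ℝ) *
        cheb2 m ((x + 2 * y * t) / (1 + x * t + y * t ^ 2))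
          (y / (1 + x * t + y * t ^ 2)) /
        (1 + x * t + y * t ^ 2) := by
  have hq : 1 + x * t + y * t ^ 2 ≠ 0 := h.ne'
  have h_d := eq_factorial_mul_cheb2_of_recurrence (d := fun n =>
      iteratedDeriv n (fun s : ℝ => 1 / (1 + x * s + y * s ^ 2)) t) (p := x + 2 * y * t) hq
    (by simp only [iteratedDeriv_one, iteratedDeriv_zero, deriv_one_div_quadratic 1 x y hq]
        field_simp
        ring)
    (iteratedDeriv_one_div_quadratic_recurrence 1 x y hq) m
  rw [h_d, iteratedDeriv_zero]
  ring
end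

section
/- For all real x, the Bessel function J₀(x) = Σ_{r=0}^∞ (-1)^r (x/2)^(2r) / (r!)², and for α, β, x real with |α x| + |β| x² < 1, one has J₀(2√(α x + β x²)) = Σ_{n=0}^∞ x^n · ₂U_n(α,β), where ₂U_n(α,β) := (-1)^n Σ_{r=0}^{⌊n/2⌋} (-1)^r α^(n-2r) β^r / ((n-2r)! (n-r)! r!). -/
open Real Finset

noncomputable def besselJ0 (z : ℝ) : ℝ :=
  ∑' r : ℕ, (-1 : ℝ) ^ r * (z / 2) ^ (2 * r) / ((Nat.factorial r : ℝ)) ^ 2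

noncomputable def twoU (n : ℕ) (α β : ℝ) : ℝ :=
  (-1 : ℝ) ^ n *
    ∑ r ∈ Finset.range (n / 2 + 1),
      (-1 : ℝ) ^ r * α ^ (n - 2 * r) * β ^ r /
        ((Nat.factorial (n - 2 * r) : ℝ) * (Nat.factorial (n - r) : ℝ) * (Nat.factorial r : ℝ))

/-!
The binomial theorem writes `J₀(2√(u + v)) = ∑ᵣ (-(u + v))ʳ / (r!)²` as the sum of the double series
`∑ (-u)ᵐ (-v)ᵏ / (m! (m + k)! k!)`, which converges absolutely for all `u, v` (it is dominated by
`e^|u| e^|v|`). Summing it instead along the lines `m + 2k = n` with `u = αx`, `v = βx²` collects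
exactly the terms of `xⁿ ₂Uₙ(α, β)`.
-/

open scoped Nat

theorem HasSum.sum_finset_fiberwise {α β γ : Type*} [AddCommMonoid α] [TopologicalSpace α]
    [ContinuousAdd α] [RegularSpace α] {f : β → α} {a : α} (hf : HasSum f a) (g : β → γ)
    (s : γ → Finset β) (hs : ∀ c b, b ∈ s c ↔ g b = c) :
    HasSum (fun c => ∑ b ∈ s c, f b) a :=
  ((Equiv.sigmaFiberEquiv g).hasSum_iff.mpr hf).sigma fun c =>
    (Equiv.subtypeEquivRight fun b => (hs c b).symm).hasSum_iff.mpr ((s c).hasSum f)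

section BinomialTerm

variable {K : Type*}

def besselJ0BinomialTerm [Field K] (u v : K) (p : ℕ × ℕ) : K :=
  (-u) ^ p.1 * (-v) ^ p.2 / (p.1 ! * (p.1 + p.2)! * p.2 !)

theorem sum_antidiagonal_besselJ0BinomialTerm [Field K] [CharZero K] (u v : K) (r : ℕ) :
    ∑ p ∈ antidiagonal r, besselJ0BinomialTerm u v p = (-(u + v)) ^ r / (r ! : K) ^ 2 := by
  rw [neg_add, (Commute.all _ _).add_pow', sum_div]
  refine sum_congr rfl fun p hp => ?_
  rw [HasAntidiagonal.mem_antidiagonal] at hp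
  subst hp
  rw [besselJ0BinomialTerm, nsmul_eq_mul, Nat.cast_add_choose]
  field_simp

theorem norm_besselJ0BinomialTerm_le [RCLike K] (u v : K) (p : ℕ × ℕ) :
    ‖besselJ0BinomialTerm u v p‖ ≤ ‖u‖ ^ p.1 / p.1 ! * (‖v‖ ^ p.2 / p.2 !) := by
  have hfac : (1 : ℝ) ≤ (p.1 + p.2)! := mod_cast (p.1 + p.2).factorial_pos
  simp only [besselJ0BinomialTerm, norm_div, norm_mul, norm_pow, norm_neg, RCLike.norm_natCast]
  rw [div_mul_div_comm]
  gcongr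
  exact le_mul_of_one_le_right (by positivity) hfac

theorem summable_besselJ0BinomialTerm [RCLike K] (u v : K) :
    Summable (besselJ0BinomialTerm u v) :=
  .of_norm_bounded ((Real.summable_pow_div_factorial _).mul_of_nonneg
    (Real.summable_pow_div_factorial _) (fun _ => by positivity) fun _ => by positivity)
    (norm_besselJ0BinomialTerm_le u v)

end BinomialTerm

theorem sum_range_besselJ0BinomialTerm_eq_pow_mul_twoU (α β x : ℝ) (n : ℕ) :
    ∑ k ∈ range (n / 2 + 1), besselJ0BinomialTerm (α * x) (β * x ^ 2) (n - 2 * k, k) =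
      x ^ n * twoU n α β := by
  rw [twoU, ← mul_assoc, mul_sum]
  refine sum_congr rfl fun k hk => ?_
  obtain ⟨m, rfl⟩ : ∃ m, n = m + 2 * k := ⟨n - 2 * k, by grind⟩
  have hsign : (-1 : ℝ) ^ (m + 2 * k) = (-1) ^ m := by simp [pow_add, pow_mul]
  rw [besselJ0BinomialTerm, Nat.add_sub_cancel, show m + 2 * k - k = m + k by omega, hsign]
  ring

def oneTwoAntidiagonal (n : ℕ) : Finset (ℕ × ℕ) :=
  (range (n / 2 + 1)).image fun k => (n - 2 * k, k)

theorem mem_oneTwoAntidiagonal {n : ℕ} {p : ℕ × ℕ} :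
    p ∈ oneTwoAntidiagonal n ↔ p.1 + 2 * p.2 = n := by
  simp only [oneTwoAntidiagonal, mem_image, mem_range, Prod.ext_iff]
  constructor
  · rintro ⟨k, hk, h₁, rfl⟩
    omega
  · intro h
    exact ⟨p.2, by omega, by omega, rfl⟩

theorem sum_oneTwoAntidiagonal {M : Type*} [AddCommMonoid M] (f : ℕ × ℕ → M) (n : ℕ) :
    ∑ p ∈ oneTwoAntidiagonal n, f p = ∑ k ∈ range (n / 2 + 1), f (n - 2 * k, k) :=
  sum_image fun _ _ _ _ h => (Prod.ext_iff.mp h).2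

theorem besselJ0_twoU_general (x α β : ℝ) :
    (∀ z : ℝ, besselJ0 z =
      ∑' r : ℕ, (-1 : ℝ) ^ r * (z / 2) ^ (2 * r) / ((Nat.factorial r : ℝ)) ^ 2) ∧
    HasSum (fun n : ℕ => x ^ n * twoU n α β)
      (∑' r : ℕ, (-(α * x + β * x ^ 2)) ^ r / ((Nat.factorial r : ℝ)) ^ 2) := by
  refine ⟨fun z => rfl, ?_⟩
  have hS := (summable_besselJ0BinomialTerm (α * x) (β * x ^ 2)).hasSum
  have hJ := hS.sum_finset_fiberwise (fun p => p.1 + p.2) antidiagonal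
    fun _ _ => HasAntidiagonal.mem_antidiagonal
  have hU := hS.sum_finset_fiberwise _ oneTwoAntidiagonal
    fun _ _ => mem_oneTwoAntidiagonal
  simp only [sum_antidiagonal_besselJ0BinomialTerm] at hJ
  simp only [sum_oneTwoAntidiagonal, sum_range_besselJ0BinomialTerm_eq_pow_mul_twoU] at hU
  rwa [hJ.tsum_eq]

theorem besselJ0_twoU (x α β : ℝ) (h : |α * x| + |β| * x ^ 2 < 1) :
    (∀ z : ℝ, besselJ0 z =
      ∑' r : ℕ, (-1 : ℝ) ^ r * (z / 2) ^ (2 * r) / ((Nat.factorial r : ℝ)) ^ 2) ∧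
    HasSum (fun n : ℕ => x ^ n * twoU n α β)
      (∑' r : ℕ, (-(α * x + β * x ^ 2)) ^ r / ((Nat.factorial r : ℝ)) ^ 2) :=
  besselJ0_twoU_general x α β
end

section
/- For all real λ, x, y and natural n, the multiplication theorem H_n(λ x, y) = Σ_{r=0}^n ((λ-1) x)^r · C(n,r) · H_{n-r}(x,y) holds, where C(n,r) is the binomial coefficient. -/
open Real Finset

/-!
The `H_n(x, y) / n!` are the coefficients of the exponential generating function
`e^{xt} e^{yt²}`. Since `e^{(x + a)t} = e^{at} e^{xt}`, comparing coefficients gives the addition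
formula `H_n(x + a, y) = ∑ C(n, r) a^r H_{n-r}(x, y)`, and the multiplication theorem is the case
`a = (λ - 1) x`.
-/

open PowerSeries Nat

noncomputable def hermite2EGF (x y : ℝ) : ℝ⟦X⟧ :=
  rescale x (exp ℝ) * expand 2 two_ne_zero (rescale y (exp ℝ))

theorem coeff_hermite2EGF (x y : ℝ) (n : ℕ) :
    coeff n (hermite2EGF x y) = hermite2 n x y / n ! := by
  rw [hermite2, mul_div_cancel_left₀ _ (by positivity), hermite2EGF, coeff_mul]
  simp only [coeff_expand, coeff_rescale, coeff_exp, mul_ite, mul_zero]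
  rw [← sum_filter]
  symm
  refine sum_nbij' (fun r ↦ (n - 2 * r, 2 * r)) (fun p ↦ p.2 / 2) ?_ ?_ ?_ ?_ ?_
  · intro r hr
    simp only [mem_range, mem_filter, HasAntidiagonal.mem_antidiagonal] at hr ⊢
    omega
  · rintro ⟨i, k⟩ hik
    simp only [mem_range, mem_filter, HasAntidiagonal.mem_antidiagonal] at hik ⊢
    omega
  · intro r _
    exact Nat.mul_div_cancel_left r two_pos
  · rintro ⟨i, k⟩ hik
    simp only [mem_filter, HasAntidiagonal.mem_antidiagonal, Prod.mk.injEq] at hik ⊢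
    omega
  · intro r _
    simp only [Nat.mul_div_cancel_left r two_pos, one_div, map_inv₀, map_natCast]
    ring

theorem hermite2EGF_add (x a y : ℝ) :
    hermite2EGF (x + a) y = rescale a (exp ℝ) * hermite2EGF x y := by
  rw [hermite2EGF, hermite2EGF, add_comm, ← exp_mul_exp_eq_exp_add, mul_assoc]

theorem hermite2_add (x a y : ℝ) (n : ℕ) :
    hermite2 n (x + a) y =
      ∑ r ∈ range (n + 1), a ^ r * n.choose r * hermite2 (n - r) x y := by
  have h := congrArg (coeff n) (hermite2EGF_add x a y)
  rw [coeff_hermite2EGF, coeff_mul, sum_antidiagonal_eq_sum_range_succ_mk,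
    div_eq_iff (by positivity)] at h
  rw [h, sum_mul]
  refine sum_congr rfl fun r hr ↦ ?_
  have hrn : r ≤ n := Nat.lt_succ_iff.mp (mem_range.mp hr)
  rw [coeff_hermite2EGF, coeff_rescale, coeff_exp, Nat.cast_choose ℝ hrn]
  simp only [one_div, map_inv₀, map_natCast]
  field_simp

theorem hermite2_mult_theorem (lam x y : ℝ) (n : ℕ) :
    hermite2 n (lam * x) y =
      ∑ r ∈ Finset.range (n + 1),
        ((lam - 1) * x) ^ r * (Nat.choose n r : ℝ) * hermite2 (n - r) x y := by
  rw [← hermite2_add]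
  congr 1
  ring
end

section
/- For fixed real x and natural n ≥ 1, the limit as real y → 0 along the sequence y/n² (equivalently, as n → ∞ with x ≠ 0 fixed) satisfies: lim_{n→∞} H_n(x, y/n²) / x^n = exp(y/x²), for x ≠ 0. -/
/-!
After the substitution `y ↦ y / n²` and division by `xⁿ`, the `r`-th term of `H_n` becomes
`n(n-1)⋯(n-2r+1) / n^{2r} · c^r / r!` with `c = y / x²`. The falling-factorial ratio lies in
`[0, 1]` and tends to `1` as `n → ∞`, so Tannery's theorem (dominated convergence for series,
with dominating series `∑ |c|^r / r!`) turns the limit into `∑ c^r / r! = exp c`.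
-/

open Real Finset Filter

open Nat Topology Asymptotics

theorem tendsto_descFactorial_div_pow (k : ℕ) :
    Tendsto (fun n : ℕ => (n.descFactorial k : ℝ) / (n : ℝ) ^ k) atTop (𝓝 1) := by
  have hpow : ∀ᶠ n : ℕ in atTop, (n : ℝ) ^ k ≠ 0 := by
    filter_upwards [eventually_ge_atTop 1] with n hn
    positivity
  exact (isEquivalent_iff_tendsto_one hpow).mp (isEquivalent_descFactorial k)

theorem descFactorial_div_pow_le_one (n k : ℕ) : (n.descFactorial k : ℝ) / (n : ℝ) ^ k ≤ 1 :=
  div_le_one_of_le₀ (mod_cast n.descFactorial_le_pow k) (by positivity)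

theorem hermite2_div_pow_eq_sum {x : ℝ} (hx : x ≠ 0) (n : ℕ) (t : ℝ) :
    hermite2 n x t / x ^ n =
      ∑ r ∈ range (n / 2 + 1), (n.descFactorial (2 * r) : ℝ) * (t / x ^ 2) ^ r / r ! := by
  rw [hermite2, mul_sum, sum_div]
  refine sum_congr rfl fun r hr => ?_
  have h2r : 2 * r ≤ n := by
    have := mem_range.mp hr
    omega
  have hfac : (n ! : ℝ) = (n - 2 * r)! * n.descFactorial (2 * r) := by
    exact_mod_cast (factorial_mul_descFactorial h2r).symm
  have hxpow : x ^ n = x ^ (n - 2 * r) * (x ^ 2) ^ r := by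
    rw [← pow_mul, ← pow_add, Nat.sub_add_cancel h2r]
  rw [hfac, hxpow, div_pow]
  field_simp

/-- For `2 * r > n` the term vanishes, because then `n.descFactorial (2 * r) = 0`. -/
noncomputable def hermite2ScaledTerm (c : ℝ) (n r : ℕ) : ℝ :=
  (n.descFactorial (2 * r) : ℝ) / (n : ℝ) ^ (2 * r) * (c ^ r / r !)

theorem hermite2_scaled_div_pow_eq_tsum {x : ℝ} (hx : x ≠ 0) (n : ℕ) (y : ℝ) :
    hermite2 n x (y / (n : ℝ) ^ 2) / x ^ n = ∑' r, hermite2ScaledTerm (y / x ^ 2) n r := by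
  have hvanish : ∀ r ∉ range (n / 2 + 1), hermite2ScaledTerm (y / x ^ 2) n r = 0 := by
    intro r hr
    have hlt : n < 2 * r := by
      rw [mem_range, not_lt] at hr
      omega
    simp [hermite2ScaledTerm, descFactorial_eq_zero_iff_lt.mpr hlt]
  rw [tsum_eq_sum hvanish, hermite2_div_pow_eq_sum hx]
  refine sum_congr rfl fun r _ => ?_
  rw [hermite2ScaledTerm]
  ring

theorem tendsto_hermite2ScaledTerm (c : ℝ) (r : ℕ) :
    Tendsto (fun n => hermite2ScaledTerm c n r) atTop (𝓝 (c ^ r / r !)) := by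
  simpa [hermite2ScaledTerm] using (tendsto_descFactorial_div_pow (2 * r)).mul_const (c ^ r / r !)

theorem norm_hermite2ScaledTerm_le (c : ℝ) (n r : ℕ) :
    ‖hermite2ScaledTerm c n r‖ ≤ |c| ^ r / r ! := by
  rw [hermite2ScaledTerm, norm_mul, Real.norm_eq_abs, abs_of_nonneg (by positivity),
    norm_div, norm_pow, Real.norm_eq_abs, RCLike.norm_natCast]
  exact mul_le_of_le_one_left (by positivity) (descFactorial_div_pow_le_one n (2 * r))

theorem hermite2_asymptotic (x y : ℝ) (hx : x ≠ 0) :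
    Tendsto (fun n : ℕ => hermite2 n x (y / (n : ℝ) ^ 2) / x ^ n)
      atTop (nhds (Real.exp (y / x ^ 2))) := by
  have hlim := tendsto_tsum_of_dominated_convergence (summable_pow_div_factorial |y / x ^ 2|)
    (tendsto_hermite2ScaledTerm (y / x ^ 2))
    (.of_forall (norm_hermite2ScaledTerm_le (y / x ^ 2)))
  rw [exp_eq_exp_ℝ, NormedSpace.exp_eq_tsum_div]
  simpa only [hermite2_scaled_div_pow_eq_tsum hx] using hlim
end
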